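/- arXiv:dg-ga/9604003 — 6 statements merged into one kernel-verified Lean document; each statement's English description precedes it below -/
import Mathlib

section
/- Let f be a profile function whose derivative f' extends continuously to [-1,1], and let l ≥ 1 be an integer such that x ↦ f(x)^l · f''(x) is interval integrable on [-1,1]. Then ∫_{-1}^{1} f(x)^{l-1} · f'(x)² dx = -(1/l) · ∫_{-1}^{1} f(x)^l · f''(x) dx; equivalently, with K(x) = -f''(x)/2, ∫_{-1}^{1} f(x)·((d/dx) f(x)^{l/2})² dx = (l/2) · ∫_{-1}^{1} f(x)^l · K(x) dx. -/
open Set MeasureTheory intervalIntegral Filter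

/-- A profile function for a surface of revolution diffeomorphic to `S²` of area `4π`:
continuous on `[-1,1]`, smooth and positive on `(-1,1)`, vanishing at `±1`,
with derivative `2` at `-1` and `-2` at `1`. -/
structure IsProfile (f : ℝ → ℝ) : Prop where
  contOn : ContinuousOn f (Icc (-1) 1)
  smoothOn : ContDiffOn ℝ (⊤ : ℕ∞) f (Ioo (-1) 1)
  pos : ∀ x ∈ Ioo (-1:ℝ) 1, 0 < f x
  zero_neg_one : f (-1) = 0
  zero_one : f 1 = 0
  deriv_neg_one : HasDerivAt f 2 (-1)
  deriv_one : HasDerivAt f (-2) 1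

/-- `λ` is an eigenvalue of the Sturm–Liouville operator
`L_k = -(d/dx)(f(x) d/dx) + k²/f(x)` on `(-1,1)`, with Dirichlet boundary
conditions at `±1` when `k ≥ 1`. -/
def InSpec (f : ℝ → ℝ) (k : ℕ) (lam : ℝ) : Prop :=
  ∃ u : ℝ → ℝ, ContinuousOn u (Icc (-1) 1) ∧ ContDiffOn ℝ (⊤ : ℕ∞) u (Ioo (-1) 1) ∧
    (∃ x ∈ Ioo (-1:ℝ) 1, u x ≠ 0) ∧
    (1 ≤ k → u (-1) = 0 ∧ u 1 = 0) ∧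
    ∀ x ∈ Ioo (-1:ℝ) 1,
      -(deriv (fun y => f y * deriv u y) x) + ((k:ℝ)^2 / f x) * u x = lam * u x

/-- The spectrum of `L_k`. -/
def Spec (f : ℝ → ℝ) (k : ℕ) : Set ℝ := {lam | InSpec f k lam}

/-- The set of distinct eigenvalues of the Laplacian of the surface of
revolution determined by `f`. -/
def Eigs (f : ℝ → ℝ) : Set ℝ := ⋃ k : ℕ, Spec f k

/-- Integration by parts identity:
`∫ f^{l-1} (f')² = -(1/l) ∫ f^l f''`, using `f(±1) = 0`. -/
theorem integration_by_parts_identity (f : ℝ → ℝ) (hf : IsProfile f)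
    (hf' : ContinuousOn (deriv f) (Icc (-1) 1))
    (l : ℕ) (hl : 1 ≤ l)
    (hint : IntervalIntegrable (fun x => f x ^ l * deriv (deriv f) x) volume (-1) 1) :
    ∫ x in (-1:ℝ)..1, f x ^ (l - 1) * (deriv f x)^2
      = -(1 / (l:ℝ)) * ∫ x in (-1:ℝ)..1, f x ^ l * deriv (deriv f) x := by
  have hIoo : IsOpen (Ioo (-1:ℝ) 1) := isOpen_Ioo
  -- f' is smooth on the open interval
  have hd1 : ContDiffOn ℝ (⊤ : ℕ∞) (deriv f) (Ioo (-1:ℝ) 1) :=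
    hf.smoothOn.deriv_of_isOpen hIoo (by simp)
  have hfderiv : ∀ x ∈ Ioo (-1:ℝ) 1, HasDerivAt f (deriv f x) x := fun x hx =>
    ((hf.smoothOn.differentiableOn (by simp)).differentiableAt
      (hIoo.mem_nhds hx)).hasDerivAt
  have hf'deriv : ∀ x ∈ Ioo (-1:ℝ) 1, HasDerivAt (deriv f) (deriv (deriv f) x) x :=
    fun x hx =>
    ((hd1.differentiableOn (by simp)).differentiableAt (hIoo.mem_nhds hx)).hasDerivAt
  set g : ℝ → ℝ := fun x => f x ^ l * deriv f x with hg
  set g' : ℝ → ℝ := fun x =>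
    (l : ℝ) * (f x ^ (l - 1) * (deriv f x) ^ 2) + f x ^ l * deriv (deriv f) x with hg'
  have hgderiv : ∀ x ∈ Ioo (-1:ℝ) 1, HasDerivAt g (g' x) x := by
    intro x hx
    have h1 : HasDerivAt (fun y => f y ^ l * deriv f y) ((l:ℝ) * f x ^ (l - 1) * deriv f x * deriv f x + f x ^ l * deriv (deriv f) x) x := ((hfderiv x hx).pow l).mul (hf'deriv x hx)
    convert h1 using 1
    simp [hg']
    ring
  have hcont1 : ContinuousOn (fun x => f x ^ (l - 1) * (deriv f x) ^ 2) (Icc (-1:ℝ) 1) :=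
    (hf.contOn.pow _).mul (hf'.pow 2)
  have hint1 : IntervalIntegrable (fun x => f x ^ (l - 1) * (deriv f x) ^ 2)
      volume (-1) 1 := by
    apply ContinuousOn.intervalIntegrable
    rwa [uIcc_of_le (by norm_num)]
  have hintg' : IntervalIntegrable g' volume (-1) 1 :=
    (hint1.const_mul _).add hint
  have hcontg : ContinuousOn g (Icc (-1:ℝ) 1) := (hf.contOn.pow _).mul hf'
  have key : ∫ x in (-1:ℝ)..1, g' x = g 1 - g (-1) :=
    integral_eq_sub_of_hasDerivAt_of_le (by norm_num) hcontg hgderiv hintg'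
  have hg1 : g 1 = 0 := by
    simp [hg, hf.zero_one, zero_pow (Nat.one_le_iff_ne_zero.mp hl)]
  have hg0 : g (-1) = 0 := by
    simp [hg, hf.zero_neg_one, zero_pow (Nat.one_le_iff_ne_zero.mp hl)]
  rw [hg1, hg0, sub_zero] at key
  have hsplit : ∫ x in (-1:ℝ)..1, g' x =
      (l:ℝ) * (∫ x in (-1:ℝ)..1, f x ^ (l - 1) * (deriv f x) ^ 2)
        + ∫ x in (-1:ℝ)..1, f x ^ l * deriv (deriv f) x := by
    rw [← intervalIntegral.integral_const_mul,
      ← intervalIntegral.integral_add (hint1.const_mul _) hint]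
  have hl0 : (l:ℝ) ≠ 0 := Nat.cast_ne_zero.mpr (Nat.one_le_iff_ne_zero.mp hl)
  rw [hsplit] at key
  field_simp
  linarith
end

section
/- Let f be a profile function and let m ≥ 1 be an integer. Suppose there exist real numbers λ and μ such that u(x) = f(x)^{m/2} satisfies -(f(x)·u'(x))' + (m²/f(x))·u(x) = λ·u(x) for all x ∈ (-1,1), and v(x) = f(x)^{m} satisfies -(f(x)·v'(x))' + ((2m)²/f(x))·v(x) = μ·v(x) for all x ∈ (-1,1). Then f(x) = 1 - x² for all x ∈ [-1,1]. -/
open Set MeasureTheory intervalIntegral Filter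

set_option maxHeartbeats 1600000 in
theorem both_powers_eigenfunctions_round' (f : ℝ → ℝ)
    (hcont : ContinuousOn f (Icc (-1) 1))
    (hsmooth : ContDiffOn ℝ (⊤ : ℕ∞) f (Ioo (-1) 1))
    (hpos : ∀ x ∈ Ioo (-1:ℝ) 1, 0 < f x)
    (hz1 : f (-1) = 0) (hz2 : f 1 = 0)
    (hdm1 : HasDerivAt f 2 (-1)) (hdp1 : HasDerivAt f (-2) 1)
    (m : ℕ) (hm : 1 ≤ m) (lam mu : ℝ)
    (hu : ∀ x ∈ Ioo (-1:ℝ) 1,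
      -(deriv (fun y => f y * deriv (fun z => f z ^ ((m:ℝ)/2)) y) x)
        + ((m:ℝ)^2 / f x) * f x ^ ((m:ℝ)/2) = lam * f x ^ ((m:ℝ)/2))
    (hv : ∀ x ∈ Ioo (-1:ℝ) 1,
      -(deriv (fun y => f y * deriv (fun z => f z ^ m) y) x)
        + ((2 * (m:ℝ))^2 / f x) * f x ^ m = mu * f x ^ m) :
    ∀ x ∈ Icc (-1:ℝ) 1, f x = 1 - x^2 := by
  have hmR : (m:ℝ) ≠ 0 := Nat.cast_ne_zero.2 (by omega)
  have hIopen : IsOpen (Ioo (-1:ℝ) 1) := isOpen_Ioo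
  have hfd : DifferentiableOn ℝ f (Ioo (-1:ℝ) 1) := hsmooth.differentiableOn (by simp)
  have hdiff : ∀ x ∈ Ioo (-1:ℝ) 1, HasDerivAt f (deriv f x) x := fun x hx =>
    (hfd.differentiableAt (hIopen.mem_nhds hx)).hasDerivAt
  have hfd2 : DifferentiableOn ℝ (deriv f) (Ioo (-1:ℝ) 1) :=
    (hsmooth.deriv_of_isOpen hIopen (m := 1) (WithTop.coe_le_coe.2 le_top)).differentiableOn one_ne_zero
  have hdiff2 : ∀ x ∈ Ioo (-1:ℝ) 1, HasDerivAt (deriv f) (deriv (deriv f) x) x := fun x hx =>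
    (hfd2.differentiableAt (hIopen.mem_nhds hx)).hasDerivAt
  set c : ℝ := (mu - 4*lam)/m with hc
  -- Step 1: f'' is the constant c on (-1,1)
  have hE : ∀ x ∈ Ioo (-1:ℝ) 1, deriv (deriv f) x = c := by
    intro x hx
    have hPx : 0 < f x := hpos x hx
    have hev1 : (fun y => f y * deriv (fun z => f z ^ ((m:ℝ)/2)) y)
        =ᶠ[nhds x] (fun y => ((m:ℝ)/2) * (f y ^ ((m:ℝ)/2) * deriv f y)) := by
      filter_upwards [hIopen.mem_nhds hx] with y hy
      rw [((hdiff y hy).rpow_const (Or.inl (hpos y hy).ne')).deriv,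
        Real.rpow_sub_one (hpos y hy).ne']
      field_simp [(hpos y hy).ne']
    have hD1 : HasDerivAt (fun y => ((m:ℝ)/2) * (f y ^ ((m:ℝ)/2) * deriv f y))
        (((m:ℝ)/2) * ((deriv f x * ((m:ℝ)/2) * f x ^ ((m:ℝ)/2 - 1)) * deriv f x
          + f x ^ ((m:ℝ)/2) * deriv (deriv f) x)) x :=
      (((hdiff x hx).rpow_const (Or.inl hPx.ne')).mul (hdiff2 x hx)).const_mul _
    have e1 := hu x hx
    rw [hev1.deriv_eq, hD1.deriv] at e1
    have hev2 : (fun y => f y * deriv (fun z => f z ^ m) y)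
        =ᶠ[nhds x] (fun y => (m:ℝ) * (f y ^ m * deriv f y)) := by
      filter_upwards [hIopen.mem_nhds hx] with y hy
      rw [((hdiff y hy).fun_pow m).deriv]
      have hpy : f y * f y ^ (m-1) = f y ^ m := by
        rw [← pow_succ', Nat.sub_add_cancel hm]
      linear_combination ((m:ℝ) * deriv f y) * hpy
    have hD2 : HasDerivAt (fun y => (m:ℝ) * (f y ^ m * deriv f y))
        ((m:ℝ) * (((m:ℝ) * f x ^ (m-1) * deriv f x) * deriv f x
          + f x ^ m * deriv (deriv f) x)) x :=
      (((hdiff x hx).pow m).mul (hdiff2 x hx)).const_mul _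
    have e2 := hv x hx
    rw [hev2.deriv_eq, hD2.deriv] at e2
    have hR : (0:ℝ) < f x ^ ((m:ℝ)/2) := Real.rpow_pos_of_pos hPx _
    have hQ : (0:ℝ) < f x ^ m := pow_pos hPx m
    have hpm : f x ^ (m-1) = f x ^ m / f x := by
      rw [eq_div_iff hPx.ne', ← pow_succ, Nat.sub_add_cancel hm]
    have e1' : (-(((m:ℝ)/2) * ((deriv f x * ((m:ℝ)/2) / f x) * deriv f x
          + deriv (deriv f) x)) + (m:ℝ)^2 / f x) * (f x ^ ((m:ℝ)/2))
        = lam * (f x ^ ((m:ℝ)/2)) := by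
      rw [← e1, Real.rpow_sub_one hPx.ne']; ring
    have e2' : (-((m:ℝ) * (((m:ℝ) * deriv f x / f x) * deriv f x
          + deriv (deriv f) x)) + (2*(m:ℝ))^2 / f x) * (f x ^ m)
        = mu * (f x ^ m) := by
      rw [← e2, hpm]; ring
    have e1'' := mul_right_cancel₀ hR.ne' e1'
    have e2'' := mul_right_cancel₀ hQ.ne' e2'
    rw [hc]
    field_simp
    linear_combination (-4 : ℝ) * e1'' + e2''
  -- Step 2: constancy helper
  have h0I : (0:ℝ) ∈ Ioo (-1:ℝ) 1 := by norm_num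
  have hconst : ∀ g : ℝ → ℝ, (∀ x ∈ Ioo (-1:ℝ) 1, HasDerivAt g 0 x) →
      ∀ x ∈ Ioo (-1:ℝ) 1, g x = g 0 := by
    intro g hg x hx
    refine Convex.is_const_of_fderivWithin_eq_zero (convex_Ioo _ _)
      (fun y hy => ((hg y hy).differentiableAt).differentiableWithinAt)
      (fun y hy => ?_) hx h0I
    rw [fderivWithin_of_isOpen hIopen hy]
    have hF : HasFDerivAt g (0 : ℝ →L[ℝ] ℝ) y := by
      exact (hg y hy).hasFDerivAt.congr_fderiv (by ext; simp)
    exact hF.fderiv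
  -- Step 3: f' is affine on (-1,1)
  have hb : ∀ x ∈ Ioo (-1:ℝ) 1, deriv f x = deriv f 0 + c * x := by
    intro x hx
    have key := hconst (fun y => deriv f y - c * y) (fun y hy => by
      have h := (hdiff2 y hy).sub ((hasDerivAt_id y).const_mul c)
      exact h.congr_deriv (by simp [hE y hy])) x hx
    simp only [mul_zero, sub_zero] at key
    linarith
  -- Step 4: f is quadratic on (-1,1)
  have hq : ∀ x ∈ Ioo (-1:ℝ) 1, f x = f 0 + deriv f 0 * x + c/2 * x^2 := by
    intro x hx
    have key := hconst (fun y => f y - (deriv f 0 * y + c/2 * y^2)) (fun y hy => by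
      have h := (hdiff y hy).sub
        (((hasDerivAt_id y).const_mul (deriv f 0)).add ((hasDerivAt_pow 2 y).const_mul (c/2)))
      refine h.congr_deriv ?_
      rw [hb y hy]; push_cast; ring) x hx
    simp only [mul_zero, zero_pow, ne_eq, OfNat.ofNat_ne_zero, not_false_eq_true,
      sub_zero, add_zero] at key
    linarith
  set a : ℝ := f 0 with ha
  set b : ℝ := deriv f 0 with hbdef
  set q : ℝ → ℝ := fun x => a + b * x + c/2 * x^2 with hqdef
  have hfq' : ∀ x ∈ Ioo (-1:ℝ) 1, f x = q x := fun x hx => hq x hx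
  -- Step 5: boundary values via limits
  have hfq : ∀ z ∈ Icc (-1:ℝ) 1, f z = q z := by
    intro z hz
    have hzc : z ∈ closure (Ioo (-1:ℝ) 1) := by
      rw [closure_Ioo (by norm_num : (-1:ℝ) ≠ 1)]; exact hz
    have hne : (nhdsWithin z (Ioo (-1:ℝ) 1)).NeBot :=
      mem_closure_iff_nhdsWithin_neBot.1 hzc
    have t1 : Tendsto f (nhdsWithin z (Ioo (-1:ℝ) 1)) (nhds (f z)) :=
      (hcont.continuousWithinAt hz).mono Ioo_subset_Icc_self
    have t2 : Tendsto q (nhdsWithin z (Ioo (-1:ℝ) 1)) (nhds (q z)) :=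
      (Continuous.continuousWithinAt (by fun_prop))
    have heq : f =ᶠ[nhdsWithin z (Ioo (-1:ℝ) 1)] q :=
      eventually_mem_nhdsWithin.mono (fun y hy => hfq' y hy)
    exact tendsto_nhds_unique (t1.congr' heq) t2
  have hq1 : q 1 = 0 := by rw [← hfq 1 (by norm_num), hz2]
  have hqm1 : q (-1) = 0 := by rw [← hfq (-1) (by norm_num), hz1]
  -- Step 6: boundary derivatives
  have hderq : ∀ z : ℝ, HasDerivAt q (b + c * z) z := by
    intro z
    have h := ((hasDerivAt_const z a).add ((hasDerivAt_id z).const_mul b)).add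
      ((hasDerivAt_pow 2 z).const_mul (c/2))
    refine h.congr_deriv ?_
    push_cast; ring
  have hclos1 : (1:ℝ) ∈ closure (Ioo (-1:ℝ) 1) := by
    rw [closure_Ioo (by norm_num : (-1:ℝ) ≠ 1)]; norm_num
  have hclosm1 : (-1:ℝ) ∈ closure (Ioo (-1:ℝ) 1) := by
    rw [closure_Ioo (by norm_num : (-1:ℝ) ≠ 1)]; norm_num
  have hint : (interior (Ioo (-1:ℝ) 1)).Nonempty := by
    rw [hIopen.interior_eq]; exact ⟨0, h0I⟩
  have hud1 : UniqueDiffWithinAt ℝ (Ioo (-1:ℝ) 1) 1 :=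
    uniqueDiffWithinAt_convex (convex_Ioo _ _) hint hclos1
  have hudm1 : UniqueDiffWithinAt ℝ (Ioo (-1:ℝ) 1) (-1) :=
    uniqueDiffWithinAt_convex (convex_Ioo _ _) hint hclosm1
  have hqd1 : HasDerivWithinAt q (-2) (Ioo (-1:ℝ) 1) 1 := by
    refine (hdp1.hasDerivWithinAt).congr (fun y hy => (hfq' y hy).symm) ?_
    rw [← hfq 1 (by norm_num)]
  have hqdm1 : HasDerivWithinAt q 2 (Ioo (-1:ℝ) 1) (-1) := by
    refine (hdm1.hasDerivWithinAt).congr (fun y hy => (hfq' y hy).symm) ?_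
    rw [← hfq (-1) (by norm_num)]
  have hbc1 : b + c * 1 = -2 := by
    rw [← (hderq 1).hasDerivWithinAt.derivWithin hud1, hqd1.derivWithin hud1]
  have hbcm1 : b + c * (-1) = 2 := by
    rw [← (hderq (-1)).hasDerivWithinAt.derivWithin hudm1, hqdm1.derivWithin hudm1]
  -- Step 7: solve
  have hq1' : a + b * 1 + c/2 * 1^2 = 0 := hq1
  have hqm1' : a + b * (-1) + c/2 * (-1)^2 = 0 := hqm1
  have hbz : b = 0 := by linarith
  have hcz : c = -2 := by linarith
  have haz : a = 1 := by nlinarith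
  intro x hx
  rw [hfq x hx, hqdef]
  simp only [hbz, hcz, haz]
  ring

/-- Rigidity: if `f^{m/2}` is an eigenfunction of `L_m` and `f^m` is an eigenfunction of
`L_{2m}`, then `f(x) = 1 - x²`, i.e. the metric has constant curvature `1`. -/
theorem both_powers_eigenfunctions_round (f : ℝ → ℝ) (hf : IsProfile f)
    (m : ℕ) (hm : 1 ≤ m) (lam mu : ℝ)
    (hu : ∀ x ∈ Ioo (-1:ℝ) 1,
      -(deriv (fun y => f y * deriv (fun z => f z ^ ((m:ℝ)/2)) y) x)
        + ((m:ℝ)^2 / f x) * f x ^ ((m:ℝ)/2) = lam * f x ^ ((m:ℝ)/2))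
    (hv : ∀ x ∈ Ioo (-1:ℝ) 1,
      -(deriv (fun y => f y * deriv (fun z => f z ^ m) y) x)
        + ((2 * (m:ℝ))^2 / f x) * f x ^ m = mu * f x ^ m) :
    ∀ x ∈ Icc (-1:ℝ) 1, f x = 1 - x^2 :=
  both_powers_eigenfunctions_round' f hf.contOn hf.smoothOn hf.pos hf.zero_neg_one
    hf.zero_one hf.deriv_neg_one hf.deriv_one m hm lam mu hu hv
end

section
/- Let k ≥ 1 be a natural number and let a : ℕ → ℝ be a sequence with a(j) > 0 for all j, such that the series ∑_{j=0}^{∞} 1/a(j) converges with sum 1/k. Then there exists j ≥ 0 such that a(j) ≤ (k+j)² + (k+j). -/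
open Set MeasureTheory intervalIntegral Filter

/-- Arithmetic core of the trace-formula argument: if `a j > 0` for all `j` and
`∑ 1/a j = 1/k`, then some `a j ≤ (k+j)² + (k+j)`. -/
theorem trace_formula_arithmetic (k : ℕ) (hk : 1 ≤ k) (a : ℕ → ℝ)
    (ha : ∀ j, 0 < a j)
    (hsum : HasSum (fun j => 1 / a j) (1 / (k:ℝ))) :
    ∃ j : ℕ, a j ≤ ((k:ℝ) + j)^2 + ((k:ℝ) + j) := by

  by_contra h
  push_neg at h
  -- telescoping sum: ∑ 1/((k+j)²+(k+j)) = 1/k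
  have hk0 : (0:ℝ) < k := by exact_mod_cast hk
  have hpos : ∀ j : ℕ, (0:ℝ) < ((k:ℝ) + j)^2 + ((k:ℝ) + j) := by
    intro j
    have : (0:ℝ) < (k:ℝ) + j := by positivity
    positivity
  have key : ∀ j : ℕ, 1 / (((k:ℝ) + j)^2 + ((k:ℝ) + j)) =
      1 / ((k:ℝ) + j) - 1 / ((k:ℝ) + j + 1) := by
    intro j
    have h1 : (0:ℝ) < (k:ℝ) + j := by positivity
    have h2 : (0:ℝ) < (k:ℝ) + j + 1 := by positivity
    field_simp
    ring
  have hpartial : ∀ n : ℕ, ∑ j ∈ Finset.range n,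
      1 / (((k:ℝ) + j)^2 + ((k:ℝ) + j)) = 1 / (k:ℝ) - 1 / ((k:ℝ) + n) := by
    intro n
    induction n with
    | zero => simp
    | succ n ih =>
      rw [Finset.sum_range_succ, ih, key]
      push_cast
      ring
  have htend : Tendsto (fun n : ℕ => ∑ j ∈ Finset.range n,
      1 / (((k:ℝ) + j)^2 + ((k:ℝ) + j))) atTop (nhds (1 / (k:ℝ))) := by
    simp only [hpartial]
    have : Tendsto (fun n : ℕ => 1 / ((k:ℝ) + n)) atTop (nhds 0) := by
      simp only [one_div]
      apply Tendsto.comp tendsto_inv_atTop_zero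
      apply tendsto_atTop_add_const_left
      exact tendsto_natCast_atTop_atTop
    simpa using tendsto_const_nhds.sub this
  have hsum2 : HasSum (fun j : ℕ => 1 / (((k:ℝ) + j)^2 + ((k:ℝ) + j))) (1 / (k:ℝ)) := by
    exact (hasSum_iff_tendsto_nat_of_nonneg (fun j => by positivity) _).mpr htend
  have hlt : (1 : ℝ) / k < 1 / k := by
    refine hasSum_lt (i := 0) ?_ ?_ hsum hsum2
    · intro j
      exact le_of_lt (one_div_lt_one_div_of_lt (hpos j) (h j))
    · exact one_div_lt_one_div_of_lt (hpos 0) (h 0)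
  exact lt_irrefl _ hlt
end

section
/- Let f be a profile function whose second derivative f'' extends to a function interval integrable on [-1,1], and set K(x) = -f''(x)/2. Then ∫_{-1}^{1} f(x) dx = 2 - ∫_{-1}^{1} x² K(x) dx. -/
open Set MeasureTheory intervalIntegral Filter
open Topology

theorem area_curvature_identity' (f : ℝ → ℝ)
    (hcont : ContinuousOn f (Icc (-1) 1))
    (hsmooth : ContDiffOn ℝ (⊤ : ℕ∞) f (Ioo (-1) 1))
    (hz1 : f (-1) = 0) (hz2 : f 1 = 0)
    (hd1 : HasDerivAt f 2 (-1)) (hd2 : HasDerivAt f (-2) 1)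
    (hint : IntervalIntegrable (fun x => deriv (deriv f) x) volume (-1) 1) :
    ∫ x in (-1:ℝ)..1, f x
      = 2 - ∫ x in (-1:ℝ)..1, x^2 * (-(deriv (deriv f) x) / 2) := by
  set F : ℝ → ℝ := deriv f with hF
  set G : ℝ → ℝ := deriv F with hGdef
  have hIcc : uIcc (-1:ℝ) 1 = Icc (-1) 1 := uIcc_of_le (by norm_num)
  have hGint : IntervalIntegrable G volume (-1) 1 := hint
  -- derivative facts on Ioo
  have hfd : ∀ x ∈ Ioo (-1:ℝ) 1, HasDerivAt f (F x) x := fun x hx =>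
    ((hsmooth.differentiableOn (by simp)).differentiableAt
      (isOpen_Ioo.mem_nhds hx)).hasDerivAt
  have hFsm : ContDiffOn ℝ (⊤ : ℕ∞) F (Ioo (-1:ℝ) 1) :=
    hsmooth.deriv_of_isOpen isOpen_Ioo (by simp)
  have hFd : ∀ x ∈ Ioo (-1:ℝ) 1, HasDerivAt F (G x) x := fun x hx =>
    ((hFsm.differentiableOn (by simp)).differentiableAt
      (isOpen_Ioo.mem_nhds hx)).hasDerivAt
  have h0 : (0:ℝ) ∈ Ioo (-1:ℝ) 1 := by norm_num
  set Kc : ℝ → ℝ := fun x => F 0 + ∫ t in (0:ℝ)..x, G t with hKcdef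
  have hKcF : ∀ x ∈ Ioo (-1:ℝ) 1, Kc x = F x := by
    intro x hx
    have hsub : uIcc (0:ℝ) x ⊆ Ioo (-1:ℝ) 1 := Set.OrdConnected.uIcc_subset ordConnected_Ioo h0 hx
    have : ∫ t in (0:ℝ)..x, G t = F x - F 0 := by
      apply integral_eq_sub_of_hasDerivAt
      · exact fun t ht => hFd t (hsub ht)
      · exact hGint.mono_set (by rw [hIcc]; exact hsub.trans Ioo_subset_Icc_self)
    simp [hKcdef, this]
  have hKcCont : ContinuousOn Kc (Icc (-1:ℝ) 1) := by
    have := continuousOn_primitive_interval' (μ := volume) (f := G) (a := (0:ℝ)) (b₁ := (-1:ℝ)) (b₂ := 1)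
      hGint (by rw [hIcc]; exact ⟨by norm_num, by norm_num⟩)
    rw [hIcc] at this
    exact continuousOn_const.add this
  have hKcCont' : ContinuousOn Kc (uIcc (-1:ℝ) 1) := hIcc ▸ hKcCont
  have hcont' : ContinuousOn f (uIcc (-1:ℝ) 1) := hIcc ▸ hcont
  have hKint : IntervalIntegrable Kc volume (-1) 1 := hKcCont'.intervalIntegrable
  -- f x = f a + ∫ a..x Kc
  have hfint_eq : ∀ x ∈ Icc (-1:ℝ) 1, ∫ t in (-1:ℝ)..x, Kc t = f x - f (-1) := by
    intro x hx
    apply integral_eq_sub_of_hasDeriv_right_of_le hx.1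
      (hcont.mono (Icc_subset_Icc le_rfl hx.2))
    · intro t ht
      have htI : t ∈ Ioo (-1:ℝ) 1 := ⟨ht.1, lt_of_lt_of_le ht.2 hx.2⟩
      rw [hKcF t htI]
      exact (hfd t htI).hasDerivWithinAt
    · exact hKint.mono_set (by rw [hIcc, uIcc_of_le hx.1]; exact Icc_subset_Icc le_rfl hx.2)
  have hmeasK : AEStronglyMeasurable Kc (volume.restrict (Icc (-1:ℝ) 1)) :=
    hKcCont.aestronglyMeasurable measurableSet_Icc
  -- Kc (-1) = 2
  have hUD : UniqueDiffOn ℝ (Icc (-1:ℝ) 1) := uniqueDiffOn_Icc (by norm_num)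
  have hKc_neg : Kc (-1) = 2 := by
    have hIccmem : Icc (-1:ℝ) 1 ∈ 𝓝[Ici (-1:ℝ)] (-1) := by
      rw [← nhdsWithin_Icc_eq_nhdsGE (show (-1:ℝ) < 1 by norm_num)]
      exact self_mem_nhdsWithin
    have hIccmem' : Icc (-1:ℝ) 1 ∈ 𝓝[>] (-1:ℝ) :=
      nhdsWithin_mono (-1) Ioi_subset_Ici_self hIccmem
    have hJ : HasDerivWithinAt (fun u => ∫ x in (-1:ℝ)..u, Kc x) (Kc (-1)) (Ici (-1)) (-1) := by
      apply integral_hasDerivWithinAt_right (t := Ioi (-1)) (hKint.mono_set (by simp))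
        ⟨Icc (-1:ℝ) 1, hIccmem', hmeasK⟩
      exact (hKcCont (-1) ⟨le_rfl, by norm_num⟩).mono_of_mem_nhdsWithin hIccmem'
    have hJ' : HasDerivWithinAt f (Kc (-1)) (Icc (-1) 1) (-1) := by
      have h1 : HasDerivWithinAt (fun u => f (-1) + ∫ x in (-1:ℝ)..u, Kc x) (Kc (-1))
          (Icc (-1) 1) (-1) :=
        ((hJ.mono Icc_subset_Ici_self).const_add (f (-1)))
      refine h1.congr (fun y hy => ?_) (by simp)
      rw [hfint_eq y hy]; ring
    have := hJ'.derivWithin (hUD (-1) ⟨le_rfl, by norm_num⟩)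
    rw [← this, (hd1.hasDerivWithinAt.derivWithin (hUD (-1) ⟨le_rfl, by norm_num⟩))]
  have hKc_one : Kc 1 = -2 := by
    have hIccmem : Icc (-1:ℝ) 1 ∈ 𝓝[Iic (1:ℝ)] 1 := by
      rw [← nhdsWithin_Icc_eq_nhdsLE (show (-1:ℝ) < 1 by norm_num)]
      exact self_mem_nhdsWithin
    have hJ : HasDerivWithinAt (fun u => ∫ x in (-1:ℝ)..u, Kc x) (Kc 1) (Iic 1) 1 := by
      apply integral_hasDerivWithinAt_right hKint ⟨Icc (-1:ℝ) 1, hIccmem, hmeasK⟩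
      exact (hKcCont 1 ⟨by norm_num, le_rfl⟩).mono_of_mem_nhdsWithin hIccmem
    have hJ' : HasDerivWithinAt f (Kc 1) (Icc (-1) 1) 1 := by
      have h1 : HasDerivWithinAt (fun u => f (-1) + ∫ x in (-1:ℝ)..u, Kc x) (Kc 1)
          (Icc (-1) 1) 1 :=
        ((hJ.mono Icc_subset_Iic_self).const_add (f (-1)))
      refine h1.congr (fun y hy => ?_) ?_
      · rw [hfint_eq y hy]; ring
      · rw [hfint_eq 1 ⟨by norm_num, le_rfl⟩]; ring
    have := hJ'.derivWithin (hUD 1 ⟨by norm_num, le_rfl⟩)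
    rw [← this, (hd2.hasDerivWithinAt.derivWithin (hUD 1 ⟨by norm_num, le_rfl⟩))]
  -- main integration by parts
  set H : ℝ → ℝ := fun x => Kc x * (x^2/2) - f x * x with hHdef
  have hHcont : ContinuousOn H (Icc (-1:ℝ) 1) :=
    (hKcCont.mul (by fun_prop)).sub (hcont.mul (by fun_prop))
  have hHderiv : ∀ x ∈ Ioo (-1:ℝ) 1,
      HasDerivWithinAt H (G x * (x^2/2) - f x) (Ioi x) x := by
    intro x hx
    have hKx : HasDerivAt Kc (G x) x :=
      (hFd x hx).congr_of_eventuallyEq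
        (eventually_of_mem (isOpen_Ioo.mem_nhds hx) fun y hy => hKcF y hy)
    have h1 : HasDerivAt (fun y => Kc y * (y^2/2)) (G x * (x^2/2) + Kc x * (2*x^1/2)) x :=
      hKx.mul ((hasDerivAt_pow 2 x).div_const 2)
    have h2 : HasDerivAt (fun y => f y * y) (F x * x + f x * 1) x :=
      (hfd x hx).mul (hasDerivAt_id x)
    have h3 := h1.sub h2
    have heq : G x * (x^2/2) + Kc x * (2*x^1/2) - (F x * x + f x * 1)
        = G x * (x^2/2) - f x := by rw [hKcF x hx]; ring
    rw [heq] at h3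
    exact h3.hasDerivWithinAt
  have hH'int : IntervalIntegrable (fun x => G x * (x^2/2) - f x) volume (-1) 1 :=
    (hGint.mul_continuousOn (by fun_prop)).sub
      hcont'.intervalIntegrable
  have key : ∫ x in (-1:ℝ)..1, (G x * (x^2/2) - f x) = H 1 - H (-1) :=
    integral_eq_sub_of_hasDeriv_right_of_le (by norm_num) hHcont hHderiv hH'int
  have hH1 : H 1 = -1 := by simp [hHdef, hKc_one, hz2]
  have hHm1 : H (-1) = 1 := by simp [hHdef, hKc_neg, hz1]
  rw [hH1, hHm1] at key
  rw [intervalIntegral.integral_sub (hGint.mul_continuousOn (by fun_prop))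
    hcont'.intervalIntegrable] at key
  have hflip : ∫ x in (-1:ℝ)..1, x^2 * (-(G x)/2) = -∫ x in (-1:ℝ)..1, G x * (x^2/2) := by
    rw [← intervalIntegral.integral_neg]
    apply intervalIntegral.integral_congr
    intro x _; ring
  rw [hflip]
  linarith

/-- Double integration by parts: `∫ f = 2 - ∫ x² K(x) dx` with `K = -f''/2`,
using `f(±1) = 0`, `f'(-1) = 2`, `f'(1) = -2`. -/
theorem area_curvature_identity (f : ℝ → ℝ) (hf : IsProfile f)
    (hint : IntervalIntegrable (fun x => deriv (deriv f) x) volume (-1) 1) :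
    ∫ x in (-1:ℝ)..1, f x
      = 2 - ∫ x in (-1:ℝ)..1, x^2 * (-(deriv (deriv f) x) / 2) := by
  obtain ⟨hcont, hsmooth, _, hz1, hz2, hd1, hd2⟩ := hf
  exact area_curvature_identity' f hcont hsmooth hz1 hz2 hd1 hd2 hint
end

section
/- Let f be a profile function such that f'' extends continuously to [-1,1], and set K(x) = -f''(x)/2. If ∫_{-1}^{1} f(x) dx ≥ 2, then there exists x₀ ∈ [-1,1] with K(x₀) < 0; that is, the surface has a point of negative Gauss curvature. -/
open Set MeasureTheory intervalIntegral Filter Topology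

/-- If `∫_{-1}^{1} f ≥ 2` then the Gauss curvature `K = -f''/2` is negative somewhere. -/
theorem negative_curvature_somewhere (f : ℝ → ℝ) (hf : IsProfile f)
    (hf'' : ContinuousOn (fun x => deriv (deriv f) x) (Icc (-1) 1))
    (harea : 2 ≤ ∫ x in (-1:ℝ)..1, f x) :
    ∃ x₀ ∈ Icc (-1:ℝ) 1, -(deriv (deriv f) x₀) / 2 < 0 := by
  by_contra hcon
  push_neg at hcon
  have hK : ∀ x ∈ Icc (-1:ℝ) 1, deriv (deriv f) x ≤ 0 := by
    intro x hx; have := hcon x hx; linarith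
  have hopen : IsOpen (Ioo (-1:ℝ) 1) := isOpen_Ioo
  have hd1 : ∀ x ∈ Ioo (-1:ℝ) 1, DifferentiableAt ℝ f x := fun x hx =>
    (hf.smoothOn.contDiffAt (hopen.mem_nhds hx)).differentiableAt (by simp)
  have hderivCD : ContDiffOn ℝ (⊤ : ℕ∞) (deriv f) (Ioo (-1:ℝ) 1) :=
    hf.smoothOn.deriv_of_isOpen hopen (by simp)
  have hd2 : ∀ x ∈ Ioo (-1:ℝ) 1, DifferentiableAt ℝ (deriv f) x := fun x hx =>
    (hderivCD.contDiffAt (hopen.mem_nhds hx)).differentiableAt (by simp)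
  have hcont1 : ContinuousOn (deriv f) (Ioo (-1:ℝ) 1) := hderivCD.continuousOn
  -- deriv f is antitone on (-1,1)
  have hanti : ∀ a ∈ Ioo (-1:ℝ) 1, ∀ b ∈ Ioo (-1:ℝ) 1, a ≤ b → deriv f b ≤ deriv f a := by
    intro a ha b hb hab
    have hsub : Icc a b ⊆ Ioo (-1:ℝ) 1 := fun x hx => ⟨lt_of_lt_of_le ha.1 hx.1, lt_of_le_of_lt hx.2 hb.2⟩
    have hA : AntitoneOn (deriv f) (Icc a b) := by
      apply antitoneOn_of_deriv_nonpos (convex_Icc a b) (hcont1.mono hsub)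
      · intro x hx
        rw [interior_Icc] at hx
        exact (hd2 x (hsub (Ioo_subset_Icc_self hx))).differentiableWithinAt
      · intro x hx
        rw [interior_Icc] at hx
        exact hK x (Ioo_subset_Icc_self (hsub (Ioo_subset_Icc_self hx)))
    exact hA (left_mem_Icc.2 hab) (right_mem_Icc.2 hab) hab
  -- deriv f ≤ 2 on (-1,1)
  have hle2 : ∀ c ∈ Ioo (-1:ℝ) 1, deriv f c ≤ 2 := by
    intro c hc
    set m := deriv f c with hm
    have key : ∀ y ∈ Icc (-1:ℝ) c, m * (y + 1) ≤ f y := by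
      intro y hy
      have hmono : MonotoneOn (fun y => f y - m * y) (Icc (-1:ℝ) c) := by
        apply monotoneOn_of_deriv_nonneg (convex_Icc _ _)
        · exact (hf.contOn.mono (Icc_subset_Icc le_rfl hc.2.le)).sub
            (continuousOn_const.mul continuousOn_id)
        · intro x hx
          rw [interior_Icc] at hx
          have hx' : x ∈ Ioo (-1:ℝ) 1 := ⟨hx.1, hx.2.trans hc.2⟩
          exact ((hd1 x hx').sub ((differentiableAt_id.const_mul m))).differentiableWithinAt
        · intro x hx
          rw [interior_Icc] at hx
          have hx' : x ∈ Ioo (-1:ℝ) 1 := ⟨hx.1, hx.2.trans hc.2⟩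
          have hder : HasDerivAt (fun y => f y - m * y) (deriv f x - m) x := by
            simpa [Pi.sub_def] using ((hd1 x hx').hasDerivAt.sub ((hasDerivAt_id x).const_mul m))
          rw [hder.deriv]
          have := hanti x hx' c hc hx.2.le
          linarith
      have h1 : (-1:ℝ) ∈ Icc (-1:ℝ) c := left_mem_Icc.2 hc.1.le
      have := hmono h1 hy hy.1
      simp only [hf.zero_neg_one] at this
      linarith
    have hslope : Tendsto (slope f (-1)) (𝓝[>] (-1:ℝ)) (𝓝 2) :=
      (hasDerivAt_iff_tendsto_slope.1 hf.deriv_neg_one).mono_left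
        (nhdsWithin_mono _ (fun y hy => ne_of_gt hy))
    refine ge_of_tendsto hslope ?_
    filter_upwards [Ioo_mem_nhdsGT_of_mem (left_mem_Ico.2 hc.1)] with y hy
    have h1 : (0:ℝ) < y - (-1) := by have := hy.1; linarith
    have h2 := key y ⟨hy.1.le, hy.2.le⟩
    rw [slope_def_field, hf.zero_neg_one, le_div_iff₀ h1]
    nlinarith
  -- deriv f ≥ -2 on (-1,1)
  have hge2 : ∀ c ∈ Ioo (-1:ℝ) 1, -2 ≤ deriv f c := by
    intro c hc
    set m := deriv f c with hm
    have key : ∀ y ∈ Icc c (1:ℝ), m * (y - 1) ≤ f y := by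
      intro y hy
      have hmono : MonotoneOn (fun y => m * y - f y) (Icc c (1:ℝ)) := by
        apply monotoneOn_of_deriv_nonneg (convex_Icc _ _)
        · exact (continuousOn_const.mul continuousOn_id).sub
            (hf.contOn.mono (Icc_subset_Icc hc.1.le le_rfl))
        · intro x hx
          rw [interior_Icc] at hx
          have hx' : x ∈ Ioo (-1:ℝ) 1 := ⟨hc.1.trans hx.1, hx.2⟩
          exact ((differentiableAt_id.const_mul m).sub (hd1 x hx')).differentiableWithinAt
        · intro x hx
          rw [interior_Icc] at hx
          have hx' : x ∈ Ioo (-1:ℝ) 1 := ⟨hc.1.trans hx.1, hx.2⟩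
          have hder : HasDerivAt (fun y => m * y - f y) (m - deriv f x) x := by
            simpa [Pi.sub_def] using (((hasDerivAt_id x).const_mul m).sub (hd1 x hx').hasDerivAt)
          rw [hder.deriv]
          have := hanti c hc x hx' hx.1.le
          linarith
      have h1 : (1:ℝ) ∈ Icc c (1:ℝ) := right_mem_Icc.2 hc.2.le
      have := hmono hy h1 hy.2
      simp only [hf.zero_one] at this
      linarith
    have hslope : Tendsto (slope f 1) (𝓝[<] (1:ℝ)) (𝓝 (-2)) :=
      (hasDerivAt_iff_tendsto_slope.1 hf.deriv_one).mono_left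
        (nhdsWithin_mono _ (fun y hy => ne_of_lt hy))
    refine le_of_tendsto hslope ?_
    filter_upwards [Ioo_mem_nhdsLT_of_mem (right_mem_Ioc.2 hc.2)] with y hy
    have h1 : y - 1 < 0 := by have := hy.2; linarith
    have h2 := key y ⟨hy.1.le, hy.2.le⟩
    rw [slope_def_field, hf.zero_one, div_le_iff_of_neg h1]
    nlinarith
  -- tangent line bounds
  have bound1 : ∀ x ∈ Icc (-1:ℝ) 1, f x ≤ 2 * x + 2 := by
    intro x hx
    have hmono : MonotoneOn (fun y => 2 * y - f y) (Icc (-1:ℝ) 1) := by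
      apply monotoneOn_of_deriv_nonneg (convex_Icc _ _)
      · exact (continuousOn_const.mul continuousOn_id).sub hf.contOn
      · intro y hy
        rw [interior_Icc] at hy
        exact ((differentiableAt_id.const_mul 2).sub (hd1 y hy)).differentiableWithinAt
      · intro y hy
        rw [interior_Icc] at hy
        have hder : HasDerivAt (fun y => 2 * y - f y) (2 - deriv f y) y := by
          simpa [Pi.sub_def] using (((hasDerivAt_id y).const_mul 2).sub (hd1 y hy).hasDerivAt)
        rw [hder.deriv]
        have := hle2 y hy
        linarith
    have h1 : (-1:ℝ) ∈ Icc (-1:ℝ) 1 := by norm_num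
    have := hmono h1 hx hx.1
    simp only [hf.zero_neg_one] at this
    linarith
  have bound2 : ∀ x ∈ Icc (-1:ℝ) 1, f x ≤ 2 - 2 * x := by
    intro x hx
    have hmono : MonotoneOn (fun y => f y + 2 * y) (Icc (-1:ℝ) 1) := by
      apply monotoneOn_of_deriv_nonneg (convex_Icc _ _)
      · exact hf.contOn.add (continuousOn_const.mul continuousOn_id)
      · intro y hy
        rw [interior_Icc] at hy
        exact ((hd1 y hy).add (differentiableAt_id.const_mul 2)).differentiableWithinAt
      · intro y hy
        rw [interior_Icc] at hy
        have hder : HasDerivAt (fun y => f y + 2 * y) (deriv f y + 2) y := by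
          simpa [Pi.add_def] using ((hd1 y hy).hasDerivAt.add ((hasDerivAt_id y).const_mul 2))
        rw [hder.deriv]
        have := hge2 y hy
        linarith
    have h1 : (1:ℝ) ∈ Icc (-1:ℝ) 1 := by norm_num
    have := hmono hx h1 hx.2
    simp only [hf.zero_one] at this
    linarith
  have h0mem : (0:ℝ) ∈ Icc (-1:ℝ) 1 := by norm_num
  have h0le : f 0 ≤ 2 := by have := bound1 0 h0mem; linarith
  rcases eq_or_lt_of_le h0le with h0eq | h0lt
  · -- f 0 = 2 : both tangent lines touch, contradiction on f'(0)
    have h0Ioo : (0:ℝ) ∈ Ioo (-1:ℝ) 1 := by norm_num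
    have hnhds : Icc (-1:ℝ) 1 ∈ 𝓝 (0:ℝ) := Icc_mem_nhds (by norm_num) (by norm_num)
    have hmin1 : IsLocalMin (fun x => 2 * x + 2 - f x) 0 := by
      filter_upwards [hnhds] with y hy
      have h := bound1 y hy
      show 2 * (0:ℝ) + 2 - f 0 ≤ 2 * y + 2 - f y
      rw [h0eq]; linarith
    have hmin2 : IsLocalMin (fun x => 2 - 2 * x - f x) 0 := by
      filter_upwards [hnhds] with y hy
      have h := bound2 y hy
      show 2 - 2 * (0:ℝ) - f 0 ≤ 2 - 2 * y - f y
      rw [h0eq]; linarith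
    have hder1 : HasDerivAt (fun x => 2 * x + 2 - f x) (2 - deriv f 0) 0 := by
      simpa [Pi.sub_def] using ((((hasDerivAt_id (0:ℝ)).const_mul 2).add_const 2).sub (hd1 0 h0Ioo).hasDerivAt)
    have hder2 : HasDerivAt (fun x => 2 - 2 * x - f x) (-2 - deriv f 0) 0 := by
      simpa [Pi.sub_def] using (((hasDerivAt_const (0:ℝ) 2).sub ((hasDerivAt_id (0:ℝ)).const_mul 2)).sub
        (hd1 0 h0Ioo).hasDerivAt)
    have e1 : 2 - deriv f 0 = 0 := by
      have := hmin1.deriv_eq_zero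
      rwa [hder1.deriv] at this
    have e2 : -2 - deriv f 0 = 0 := by
      have := hmin2.deriv_eq_zero
      rwa [hder2.deriv] at this
    linarith
  · -- f 0 < 2 : strict integral bound
    have hcont_left : ContinuousOn f (Icc (-1:ℝ) 0) :=
      hf.contOn.mono (Icc_subset_Icc le_rfl (by norm_num))
    have hcont_right : ContinuousOn f (Icc (0:ℝ) 1) :=
      hf.contOn.mono (Icc_subset_Icc (by norm_num) le_rfl)
    have hi1 : (∫ x in (-1:ℝ)..0, f x) < ∫ x in (-1:ℝ)..0, (2 * x + 2) := by
      apply intervalIntegral.integral_lt_integral_of_continuousOn_of_le_of_exists_lt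
        (by norm_num : (-1:ℝ) < 0) hcont_left
        ((continuousOn_const.mul continuousOn_id).add continuousOn_const)
      · intro x hx
        exact bound1 x ⟨hx.1.le, hx.2.trans (by norm_num)⟩
      · exact ⟨0, right_mem_Icc.2 (by norm_num), by simpa using h0lt⟩
    have hi2 : (∫ x in (0:ℝ)..1, f x) ≤ ∫ x in (0:ℝ)..1, (2 - 2 * x) := by
      apply intervalIntegral.integral_mono_on (by norm_num : (0:ℝ) ≤ 1)
      · exact (hcont_right.mono (by rw [uIcc_of_le]; norm_num)).intervalIntegrable
      · exact (Continuous.continuousOn (by continuity)).intervalIntegrable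
      · intro x hx
        exact bound2 x ⟨(by norm_num : (-1:ℝ) ≤ 0).trans hx.1, hx.2⟩
    have e1 : (∫ x in (-1:ℝ)..0, (2 * x + 2)) = 1 := by
      rw [intervalIntegral.integral_add
        ((by fun_prop : Continuous fun x:ℝ => 2 * x).intervalIntegrable _ _)
        intervalIntegrable_const, intervalIntegral.integral_const_mul, integral_id,
        intervalIntegral.integral_const]
      norm_num
    have e2 : (∫ x in (0:ℝ)..1, (2 - 2 * x)) = 1 := by
      rw [intervalIntegral.integral_sub intervalIntegrable_const
        ((by fun_prop : Continuous fun x:ℝ => 2 * x).intervalIntegrable _ _),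
        intervalIntegral.integral_const_mul, integral_id, intervalIntegral.integral_const]
      norm_num
    have hsplit : (∫ x in (-1:ℝ)..0, f x) + (∫ x in (0:ℝ)..1, f x) = ∫ x in (-1:ℝ)..1, f x := by
      apply intervalIntegral.integral_add_adjacent_intervals
      · exact (hcont_left.mono (by rw [uIcc_of_le] <;> norm_num)).intervalIntegrable
      · exact (hcont_right.mono (by rw [uIcc_of_le]; norm_num)).intervalIntegrable
    rw [e1] at hi1
    rw [e2] at hi2
    linarith
end

section
/- Define f : ℝ → ℝ by f(x) = 2(1-x²)/(1+x²). Then: (i) f is a profile function, i.e., f is smooth on an open set containing [-1,1], f(x) > 0 for x ∈ (-1,1), f(-1) = f(1) = 0, f'(-1) = 2, f'(1) = -2; (ii) ∫_{-1}^{1} f(x) dx = 2π - 4; (iii) the Gauss curvature K(x) = -f''(x)/2 equals 4(1-3x²)/(1+x²)³ for all x, so K(x) < 0 exactly when x² > 1/3; and (iv) ∫_{-1}^{1} f(x)K(x) dx = π + 4/3. -/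
open Set MeasureTheory intervalIntegral Filter

private lemma hne (x : ℝ) : (1:ℝ) + x^2 ≠ 0 := by positivity

private lemma hd1 (x : ℝ) :
    HasDerivAt (fun y : ℝ => 2 * (1 - y^2) / (1 + y^2)) (-8*x/(1+x^2)^2) x := by
  have hN : HasDerivAt (fun y : ℝ => 2 * (1 - y^2)) (2 * (0 - 2*x)) x := by
    have := ((hasDerivAt_const x (1:ℝ)).fun_sub ((hasDerivAt_id x).fun_pow 2)).const_mul 2
    simpa using this
  have hD : HasDerivAt (fun y : ℝ => 1 + y^2) (0 + 2*x) x := by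
    simpa using (hasDerivAt_const x (1:ℝ)).fun_add (((hasDerivAt_id x).fun_pow 2))
  have := hN.fun_div hD (hne x)
  convert! this using 1
  have := hne x
  field_simp
  ring

private lemma deriv_f_eq :
    deriv (fun y : ℝ => 2 * (1 - y^2) / (1 + y^2)) = fun x => -8*x/(1+x^2)^2 := by
  funext x; exact (hd1 x).deriv

private lemma hd2 (x : ℝ) :
    HasDerivAt (fun y : ℝ => -8*y/(1+y^2)^2) (-8*(1-3*x^2)/(1+x^2)^3) x := by
  have hN : HasDerivAt (fun y : ℝ => -8*y) (-8 : ℝ) x := by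
    simpa using (hasDerivAt_id x).const_mul (-8 : ℝ)
  have hD0 : HasDerivAt (fun y : ℝ => 1 + y^2) (0 + 2*x) x := by
    simpa using (hasDerivAt_const x (1:ℝ)).fun_add (((hasDerivAt_id x).fun_pow 2))
  have hD : HasDerivAt (fun y : ℝ => (1 + y^2)^2) (2 * (1+x^2)^1 * (0 + 2*x)) x :=
    hD0.fun_pow 2
  have hne2 : ((1:ℝ)+x^2)^2 ≠ 0 := by positivity
  have := hN.fun_div hD hne2
  convert! this using 1
  have := hne x
  field_simp
  ring

private lemma deriv2_eq (x : ℝ) :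
    -(deriv (deriv (fun y : ℝ => 2 * (1 - y^2) / (1 + y^2))) x) / 2
      = 4 * (1 - 3 * x^2) / (1 + x^2)^3 := by
  rw [deriv_f_eq, (hd2 x).deriv]
  have := hne x
  field_simp
  ring

/-- The example `f(x) = 2(1-x²)/(1+x²)`: it is a profile function, smooth on an open
set containing `[-1,1]`, with `∫ f = 2π - 4`, Gauss curvature
`K(x) = 4(1-3x²)/(1+x²)³` (negative exactly when `x² > 1/3`), and `∫ f K = π + 4/3`. -/
theorem example_metric_computation :
    IsProfile (fun x : ℝ => 2 * (1 - x^2) / (1 + x^2)) ∧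
    (∃ U : Set ℝ, IsOpen U ∧ Icc (-1:ℝ) 1 ⊆ U ∧
      ContDiffOn ℝ (⊤ : ℕ∞) (fun x : ℝ => 2 * (1 - x^2) / (1 + x^2)) U) ∧
    (∫ x in (-1:ℝ)..1, 2 * (1 - x^2) / (1 + x^2)) = 2 * Real.pi - 4 ∧
    (∀ x : ℝ, -(deriv (deriv (fun y : ℝ => 2 * (1 - y^2) / (1 + y^2))) x) / 2
        = 4 * (1 - 3 * x^2) / (1 + x^2)^3) ∧
    (∀ x : ℝ, -(deriv (deriv (fun y : ℝ => 2 * (1 - y^2) / (1 + y^2))) x) / 2 < 0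
        ↔ 1/3 < x^2) ∧
    (∫ x in (-1:ℝ)..1, (2 * (1 - x^2) / (1 + x^2))
        * (-(deriv (deriv (fun y : ℝ => 2 * (1 - y^2) / (1 + y^2))) x) / 2))
      = Real.pi + 4/3  := by
  have hne' : ∀ x : ℝ, (1:ℝ) + x^2 ≠ 0 := hne
  have hcont : Continuous (fun x : ℝ => 2 * (1 - x^2) / (1 + x^2)) :=
    (continuous_const.mul (continuous_const.sub (continuous_pow 2))).div
      (continuous_const.add (continuous_pow 2)) hne'
  have hsmooth : ContDiff ℝ (⊤ : ℕ∞) (fun x : ℝ => 2 * (1 - x^2) / (1 + x^2)) :=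
    ContDiff.div (by fun_prop) (by fun_prop) hne'
  refine ⟨?_, ⟨univ, isOpen_univ, subset_univ _, hsmooth.contDiffOn⟩, ?_, deriv2_eq, ?_, ?_⟩
  · refine ⟨hcont.continuousOn, hsmooth.contDiffOn, ?_, by norm_num, by norm_num, ?_, ?_⟩
    · intro x hx
      obtain ⟨h1, h2⟩ := hx
      have hx2 : x^2 < 1 := by nlinarith
      have : (0:ℝ) < 2 * (1 - x^2) := by nlinarith
      positivity
    · have := hd1 (-1); convert this using 1; norm_num
    · have := hd1 1; convert this using 1; norm_num
  · -- ∫ f = 2π - 4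
    have hF : ∀ x ∈ uIcc (-1:ℝ) 1,
        HasDerivAt (fun y : ℝ => 4 * Real.arctan y - 2 * y)
          (2 * (1 - x^2) / (1 + x^2)) x := by
      intro x _
      have h := ((Real.hasDerivAt_arctan x).const_mul 4).fun_sub ((hasDerivAt_id x).const_mul 2)
      convert! h using 1
      have := hne x
      field_simp
      ring
    rw [intervalIntegral.integral_eq_sub_of_hasDerivAt hF (hcont.intervalIntegrable _ _)]
    simp [Real.arctan_one, Real.arctan_neg]
    ring
  · -- sign of curvature
    intro x
    rw [deriv2_eq x]
    have hpos : (0:ℝ) < (1 + x^2)^3 := by positivity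
    rw [div_neg_iff]
    constructor
    · rintro (⟨h, h'⟩ | ⟨h, h'⟩)
      · linarith
      · nlinarith
    · intro h
      right
      constructor
      · nlinarith
      · exact hpos
  · -- ∫ f K = π + 4/3
    have hcongr : (∫ x in (-1:ℝ)..1, (2 * (1 - x^2) / (1 + x^2))
          * (-(deriv (deriv (fun y : ℝ => 2 * (1 - y^2) / (1 + y^2))) x) / 2))
        = ∫ x in (-1:ℝ)..1,
            (2 * (1 - x^2) / (1 + x^2)) * (4 * (1 - 3 * x^2) / (1 + x^2)^3) := by
      apply intervalIntegral.integral_congr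
      intro x _
      simp only [deriv2_eq]
    rw [hcongr]
    have hgcont : Continuous (fun x : ℝ =>
        (2 * (1 - x^2) / (1 + x^2)) * (4 * (1 - 3 * x^2) / (1 + x^2)^3)) := by
      apply Continuous.mul
      · exact hcont
      · exact (continuous_const.mul (continuous_const.sub
          (continuous_const.mul (continuous_pow 2)))).div
          ((continuous_const.add (continuous_pow 2)).pow 3)
          (fun x => by positivity)
    have hF : ∀ x ∈ uIcc (-1:ℝ) 1,
        HasDerivAt (fun y : ℝ => 2 * Real.arctan y + 2*y/(1+y^2)
            - 20/3 * (y/(1+y^2)^2) + 32/3 * (y/(1+y^2)^3))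
          ((2 * (1 - x^2) / (1 + x^2)) * (4 * (1 - 3 * x^2) / (1 + x^2)^3)) x := by
      intro x _
      have hD0 : HasDerivAt (fun y : ℝ => 1 + y^2) (0 + 2*x) x := by
        simpa using (hasDerivAt_const x (1:ℝ)).fun_add (((hasDerivAt_id x).fun_pow 2))
      have h1 := (Real.hasDerivAt_arctan x).const_mul 2
      have h2 : HasDerivAt (fun y : ℝ => 2*y/(1+y^2))
          ((2 * (1+x^2) - 2*x*(0+2*x)) / (1+x^2)^2) x := by
        simpa using ((hasDerivAt_id x).const_mul 2).fun_div hD0 (hne x)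
      have h3 : HasDerivAt (fun y : ℝ => 20/3 * (y/(1+y^2)^2))
          (20/3 * ((1 * (1+x^2)^2 - x * (2*(1+x^2)^1*(0+2*x))) / ((1+x^2)^2)^2)) x := by
        exact ((hasDerivAt_id x).fun_div (hD0.fun_pow 2) (by positivity)).const_mul (20/3)
      have h4 : HasDerivAt (fun y : ℝ => 32/3 * (y/(1+y^2)^3))
          (32/3 * ((1 * (1+x^2)^3 - x * (3*(1+x^2)^2*(0+2*x))) / ((1+x^2)^3)^2)) x := by
        exact ((hasDerivAt_id x).fun_div (hD0.fun_pow 3) (by positivity)).const_mul (32/3)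
      have H := ((h1.fun_add h2).fun_sub h3).fun_add h4
      convert! H using 1
      have := hne x
      field_simp
      ring
    rw [intervalIntegral.integral_eq_sub_of_hasDerivAt hF (hgcont.intervalIntegrable _ _)]
    simp [Real.arctan_one, Real.arctan_neg]
    ring
end
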